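/- Let gf1(a,c) := gf(a,a,c,0) be the generating function of weighted lattice paths from (a,a) to (c,0). Then for c \ge a \ge 0, gf1(a,c) = (2 q^a)^{a-c} \prod_{j=1}^{c-a} ( (X q^{j-1} + Y q^{1-j})(1 - q^{2a+2j}) ) / (1 - q^{2j}). -/

import Mathlib

/-- The field of rational functions in the three indeterminates `X`, `Y`, `q`. -/
noncomputable abbrev MyF : Type := FractionRing (MvPolynomial (Fin 3) ℚ)

/-- The indeterminate `X`. -/
noncomputable def Xv : MyF := algebraMap (MvPolynomial (Fin 3) ℚ) MyF (MvPolynomial.X 0)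
/-- The indeterminate `Y`. -/
noncomputable def Yv : MyF := algebraMap (MvPolynomial (Fin 3) ℚ) MyF (MvPolynomial.X 1)
/-- The indeterminate `q`. -/
noncomputable def qv : MyF := algebraMap (MvPolynomial (Fin 3) ℚ) MyF (MvPolynomial.X 2)

/-- The weight of a lattice path (encoded as a list of steps, `true` = right step,
`false` = down step) starting at a given point: a right step from `(u,v)` to `(u+1,v)`
has weight `(X q^{u-2v} + Y q^{2v-u})/2`, a down step has weight `1`, and the weight
of the path is the product of the weights of its steps. -/
noncomputable def pathWeight (X Y q : MyF) : ℤ × ℤ → List Bool → MyF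
  | _, [] => 1
  | p, true :: s =>
      (X * q ^ (p.1 - 2 * p.2) + Y * q ^ (2 * p.2 - p.1)) / 2 *
        pathWeight X Y q (p.1 + 1, p.2) s
  | p, false :: s => pathWeight X Y q (p.1, p.2 - 1) s

/-- The endpoint of a lattice path (list of steps) starting at a given point. -/
def endpt : ℤ × ℤ → List Bool → ℤ × ℤ
  | p, [] => p
  | p, true :: s => endpt (p.1 + 1, p.2) s
  | p, false :: s => endpt (p.1, p.2 - 1) s

/-- `gf X Y q a b c d` is the generating function of all lattice paths from `(a,b)`
to `(c,d)` with unit steps to the right and downwards, weighted as in `pathWeight`.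
(Any such path has exactly `c-a` right steps and `b-d` down steps, hence length
`(c-a)+(b-d)`; the sum ranges over all step sequences of that length ending at
`(c,d)`.  In particular `gf X Y q a b c d = 0` when `a > c` or `b < d`.) -/
noncomputable def gf (X Y q : MyF) (a b c d : ℤ) : MyF :=
  ∑ s : Fin ((c - a) + (b - d)).toNat → Bool,
    if endpt (a, b) (List.ofFn s) = (c, d) then pathWeight X Y q (a, b) (List.ofFn s) else 0

/-! The statement is the case `b = a` of a closed form for paths from any height `b ≥ 0`:
`gf(a,b,c,0) = (2q^b)^{a-c} ∏_{t<c-a} L(a-b+t) (1 - q^{2b+2t+2}) / (1 - q^{2t+2})`,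
where `L(s) = X q^s + Y q^{-s}`, so that a right step from `(u,v)` has weight `L(u-2v)/2`.
Splitting off the first step gives the recursion `G(a,b) = L(a-2b)/2 ⬝ G(a+1,b) + G(a,b-1)`
for `a < c`, and both sides have the same boundary values: `1` on the column `a = c` and `0` on
the row `b = -1` (where the closed form contains the factor `1 - q^0`). That the closed form
satisfies the recursion reduces, after cancelling common factors, to the three-term identity
`q^b L(s-b) (1 - q^{2p}) + q^p L(s+p) (1 - q^{2b}) = L(s) (1 - q^{2b+2p})`. -/

open Finset

section ClosedForm

variable {F : Type*} [Field F] (X Y q : F)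

def stepFactor (s : ℤ) : F := X * q ^ s + Y * q ^ (-s)

def rightStepWeight (u v : ℤ) : F := (X * q ^ (u - 2 * v) + Y * q ^ (2 * v - u)) / 2

def pathClosedForm (a b c : ℤ) : F :=
  (2 * q ^ b) ^ (a - c) *
    (∏ t ∈ range (c - a).toNat, stepFactor X Y q (a - b + t)) *
    (∏ t ∈ range (c - a).toNat, (1 - q ^ (2 * b + 2 * ((t : ℤ) + 1)))) /
    ∏ t ∈ range (c - a).toNat, (1 - q ^ (2 * ((t : ℤ) + 1)))

variable {X Y q}

lemma rightStepWeight_eq (u v : ℤ) :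
    rightStepWeight X Y q u v = stepFactor X Y q (u - 2 * v) / 2 := by
  rw [stepFactor, neg_sub, rightStepWeight]

lemma stepFactor_three_term (hq : q ≠ 0) (s b p : ℤ) :
    q ^ b * stepFactor X Y q (s - b) * (1 - q ^ (2 * p)) +
        q ^ p * stepFactor X Y q (s + p) * (1 - q ^ (2 * b)) =
      stepFactor X Y q s * (1 - q ^ (2 * b + 2 * p)) := by
  simp only [stepFactor, neg_sub, neg_add, zpow_add₀ hq, zpow_sub₀ hq, zpow_neg, zpow_mul']
  field_simp
  ring

lemma one_sub_zpow_two_mul_ne_zero (hq : ¬IsOfFinOrder q) (t : ℕ) :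
    1 - q ^ (2 * ((t : ℤ) + 1)) ≠ 0 := by
  rw [show 2 * ((t : ℤ) + 1) = (2 * (t + 1) : ℕ) by push_cast; ring, zpow_natCast, sub_ne_zero,
    ne_comm]
  exact fun h => hq (isOfFinOrder_iff_pow_eq_one.2 ⟨_, by omega, h⟩)

lemma prod_stepFactor_range_succ' (s : ℤ) (m : ℕ) :
    ∏ t ∈ range (m + 1), stepFactor X Y q (s + t) =
      stepFactor X Y q s * ∏ t ∈ range m, stepFactor X Y q (s + 1 + t) := by
  rw [prod_range_succ', mul_comm, Nat.cast_zero, add_zero]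
  congr 1
  exact prod_congr rfl fun t _ => by push_cast; ring_nf

lemma prod_one_sub_zpow_range_succ' (b : ℤ) (m : ℕ) :
    ∏ t ∈ range (m + 1), (1 - q ^ (2 * (b - 1) + 2 * ((t : ℤ) + 1))) =
      (1 - q ^ (2 * b)) * ∏ t ∈ range m, (1 - q ^ (2 * b + 2 * ((t : ℤ) + 1))) := by
  rw [prod_range_succ', mul_comm]
  congr 1
  · ring_nf
  · exact prod_congr rfl fun t _ => by push_cast; ring_nf

lemma pathClosedForm_self (a b : ℤ) : pathClosedForm X Y q a b a = 1 := by
  simp [pathClosedForm]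

lemma pathClosedForm_neg_one {a c : ℤ} (h : a < c) : pathClosedForm X Y q a (-1) c = 0 := by
  have hB : ∏ t ∈ range (c - a).toNat, (1 - q ^ (2 * (-1 : ℤ) + 2 * ((t : ℤ) + 1))) = 0 :=
    prod_eq_zero (i := 0) (by simp; omega) (by simp)
  rw [pathClosedForm, hB, mul_zero, zero_div]

lemma pathClosedForm_rec [NeZero (2 : F)] (hq0 : q ≠ 0) (hq : ¬IsOfFinOrder q) {a c : ℤ}
    (h : a < c) (b : ℤ) :
    pathClosedForm X Y q a b c =
      rightStepWeight X Y q a b * pathClosedForm X Y q (a + 1) b c +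
        pathClosedForm X Y q a (b - 1) c := by
  obtain ⟨m, hm⟩ : ∃ m : ℕ, c - a = m + 1 := ⟨(c - a - 1).toNat, by omega⟩
  have hn : (c - a).toNat = m + 1 := by omega
  have hn' : (c - (a + 1)).toNat = m := by omega
  have h2 : 2 * q ^ b ≠ 0 := mul_ne_zero two_ne_zero (zpow_ne_zero _ hq0)
  have hK : (2 * q ^ b) ^ (a + 1 - c) = (2 * q ^ b) ^ (a - c) * (2 * q ^ b) := by
    rw [← zpow_add_one₀ h2]; ring_nf
  have hK' : (2 * q ^ (b - 1)) ^ (a - c) = (2 * q ^ b) ^ (a - c) * q ^ ((m : ℤ) + 1) := by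
    rw [zpow_sub_one₀ hq0, ← mul_assoc, mul_zpow, inv_zpow', neg_sub, hm]
  have hD := prod_ne_zero_iff.2 fun t (_ : t ∈ range m) => one_sub_zpow_two_mul_ne_zero hq t
  have hE := one_sub_zpow_two_mul_ne_zero hq m
  have key := stepFactor_three_term (X := X) (Y := Y) hq0 (a - b) b (m + 1)
  rw [show a - b - b = a - 2 * b by ring, ← add_assoc, add_right_comm] at key
  simp only [pathClosedForm, hn, hn', rightStepWeight_eq, show a - (b - 1) = a - b + 1 by ring,
    show a + 1 - b = a - b + 1 by ring, hK, hK']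
  rw [prod_stepFactor_range_succ', prod_one_sub_zpow_range_succ',
    prod_range_succ (fun t : ℕ => stepFactor X Y q (a - b + 1 + t)),
    prod_range_succ (fun t : ℕ => 1 - q ^ (2 * b + 2 * ((t : ℤ) + 1))),
    prod_range_succ (fun t : ℕ => 1 - q ^ (2 * ((t : ℤ) + 1)))]
  field_simp
  linear_combination -(∏ t ∈ range m, stepFactor X Y q (a - b + 1 + t)) *
    (∏ t ∈ range m, (1 - q ^ (2 * b + 2 * ((t : ℤ) + 1)))) * key

end ClosedForm

section PathSums

variable (X Y q : MyF)

noncomputable def pathSum (n : ℕ) (p e : ℤ × ℤ) : MyF :=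
  ∑ s : Fin n → Bool, if endpt p (List.ofFn s) = e then pathWeight X Y q p (List.ofFn s) else 0

lemma gf_eq_pathSum (a b c d : ℤ) :
    gf X Y q a b c d = pathSum X Y q ((c - a) + (b - d)).toNat (a, b) (c, d) := rfl

lemma endpt_eq (s : List Bool) (p : ℤ × ℤ) :
    endpt p s = (p.1 + s.count true, p.2 - s.count false) := by
  induction s generalizing p with
  | nil => simp [endpt]
  | cons x s ih => cases x <;> simp [endpt, ih] <;> omega

variable {X Y q}

lemma pathSum_eq_zero {n : ℕ} {p e : ℤ × ℤ} (h : ¬(p.1 ≤ e.1 ∧ e.2 ≤ p.2)) :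
    pathSum X Y q n p e = 0 := by
  refine sum_eq_zero fun s _ => if_neg fun hs => h ?_
  rw [← hs, endpt_eq]
  omega

lemma pathSum_zero_self (p : ℤ × ℤ) : pathSum X Y q 0 p p = 1 := by
  simp [pathSum, endpt, pathWeight]

lemma pathSum_succ (n : ℕ) (p e : ℤ × ℤ) :
    pathSum X Y q (n + 1) p e =
      rightStepWeight X Y q p.1 p.2 * pathSum X Y q n (p.1 + 1, p.2) e +
        pathSum X Y q n (p.1, p.2 - 1) e := by
  rw [pathSum, ← (Fin.consEquiv fun _ => Bool).sum_comp, Fintype.sum_prod_type, Fintype.sum_bool,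
    pathSum, pathSum, mul_sum]
  congr 1 <;> refine sum_congr rfl fun s _ => ?_ <;>
    simp [Fin.consEquiv, List.ofFn_succ, endpt, pathWeight, rightStepWeight, mul_ite]

lemma gf_rec {a b c d : ℤ} (h : 0 < (c - a) + (b - d)) :
    gf X Y q a b c d =
      rightStepWeight X Y q a b * gf X Y q (a + 1) b c d + gf X Y q a (b - 1) c d := by
  simp only [gf_eq_pathSum]
  rw [show ((c - a) + (b - d)).toNat = ((c - (a + 1)) + (b - d)).toNat + 1 by omega,
    pathSum_succ, show (c - a) + (b - 1 - d) = (c - (a + 1)) + (b - d) by ring]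

lemma gf_eq_one_of_le {a b d : ℤ} (h : d ≤ b) : gf X Y q a b a d = 1 := by
  induction b, h using Int.leInduction with
  | base => simp [gf_eq_pathSum, pathSum_zero_self]
  | succ b hb ih =>
    rw [gf_rec (by omega), gf_eq_pathSum X Y q (a + 1), pathSum_eq_zero (by simp), mul_zero,
      zero_add, add_sub_cancel_right, ih]

lemma gf_eq_zero_of_lt {a b c d : ℤ} (h : b < d) : gf X Y q a b c d = 0 :=
  pathSum_eq_zero (by simp; omega)

end PathSums

theorem eq_of_rec_of_boundary {R : Type*} [Add R] [Mul R] (w f g : ℤ → ℤ → R) (c : ℤ)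
    (hf : ∀ a b, a < c → 0 ≤ b → f a b = w a b * f (a + 1) b + f a (b - 1))
    (hg : ∀ a b, a < c → 0 ≤ b → g a b = w a b * g (a + 1) b + g a (b - 1))
    (hcol : ∀ b, 0 ≤ b → f c b = g c b) (hrow : ∀ a, a < c → f a (-1) = g a (-1))
    {a b : ℤ} (ha : a ≤ c) (hb : 0 ≤ b) : f a b = g a b := by
  suffices h : ∀ n b : ℕ, f (c - n) b = g (c - n) b by
    obtain ⟨n, rfl⟩ : ∃ n : ℕ, a = c - n := ⟨(c - a).toNat, by omega⟩
    lift b to ℕ using hb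
    exact h n b
  intro n
  induction n with
  | zero => exact fun b => by simpa using hcol b (by positivity)
  | succ n ihn =>
    have hlt : c - n - 1 < c := by omega
    intro b
    rw [Nat.cast_succ, ← sub_sub]
    induction b with
    | zero =>
      rw [hf _ _ hlt (by simp), hg _ _ hlt (by simp), sub_add_cancel, ihn, Nat.cast_zero, zero_sub,
        hrow _ hlt]
    | succ b ihb =>
      rw [hf _ _ hlt (by positivity), hg _ _ hlt (by positivity), sub_add_cancel, ihn,
        Nat.cast_succ, add_sub_cancel_right, ihb]

theorem gf_eq_pathClosedForm {X Y q : MyF} (hq0 : q ≠ 0) (hq : ¬IsOfFinOrder q) {a b c : ℤ}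
    (hac : a ≤ c) (hb : 0 ≤ b) : gf X Y q a b c 0 = pathClosedForm X Y q a b c :=
  eq_of_rec_of_boundary (rightStepWeight X Y q) (fun a b => gf X Y q a b c 0)
    (fun a b => pathClosedForm X Y q a b c) c (fun _ _ h hb => gf_rec (by omega))
    (fun _ b h _ => pathClosedForm_rec hq0 hq h b)
    (fun _ hb => by rw [gf_eq_one_of_le hb, pathClosedForm_self])
    (fun _ h => by rw [gf_eq_zero_of_lt (by omega), pathClosedForm_neg_one h]) hac hb

lemma qv_ne_zero : qv ≠ 0 :=
  (map_ne_zero_iff _ (IsFractionRing.injective _ _)).2 (MvPolynomial.X_ne_zero 2)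

lemma not_isOfFinOrder_qv : ¬IsOfFinOrder qv := by
  rw [isOfFinOrder_iff_pow_eq_one]
  rintro ⟨n, hn, h⟩
  have hX : (MvPolynomial.X 2 : MvPolynomial (Fin 3) ℚ) ^ n = 1 :=
    IsFractionRing.injective (MvPolynomial (Fin 3) ℚ) MyF (by simpa [qv] using h)
  simpa [hn.ne'] using congrArg (MvPolynomial.eval 0) hX

/-- For `c ≥ a ≥ 0`, the generating function `gf1(a,c) := gf(a,a,c,0)` of weighted
lattice paths from `(a,a)` to `(c,0)` equals
`(2 q^a)^{a-c} ∏_{j=1}^{c-a} ((X q^{j-1} + Y q^{1-j})(1 - q^{2a+2j}))/(1 - q^{2j})`. -/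
theorem gf_one_eval (a c : ℤ) (ha : 0 ≤ a) (hac : a ≤ c) :
    gf Xv Yv qv a a c 0 =
      (2 * qv ^ a) ^ (a - c) *
        ∏ t ∈ Finset.range (c - a).toNat,
          ((Xv * qv ^ ((t : ℤ) + 1 - 1) + Yv * qv ^ (1 - ((t : ℤ) + 1))) *
              (1 - qv ^ (2 * a + 2 * ((t : ℤ) + 1)))) /
            (1 - qv ^ (2 * ((t : ℤ) + 1))) := by
  rw [gf_eq_pathClosedForm qv_ne_zero not_isOfFinOrder_qv hac ha]
  simp only [pathClosedForm, stepFactor, sub_self, zero_add, add_sub_cancel_right,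
    sub_add_cancel_right, prod_div_distrib, prod_mul_distrib]
  ring
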